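/- Let d_C be the transportation metric on Δ(Δ(U)) with ground cost the L1 distance on Δ(U), for a finite set U. If d_C(D_{X|W}, D_{X'|W'}) ≤ ε ≤ 1/2, then the conditional entropies of the associated random variables satisfy |H(X|W) - H(X'|W')| ≤ ε·log(|U|/ε). -/

import Mathlib

/-- A coupling of two finitely supported weight vectors. -/
def IsCoupling {I J : Type*} [Fintype I] [Fintype J]
    (w1 : I → ℝ) (w2 : J → ℝ) (γ : I → J → ℝ) : Prop :=
  (∀ i j, 0 ≤ γ i j) ∧ (∀ i, ∑ j, γ i j = w1 i) ∧ (∀ j, ∑ i, γ i j = w2 j)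

/-- Transportation cost of a coupling, with ground cost the L1 distance between
the associated distributions on `U`. -/
noncomputable def tcost {I J U : Type*} [Fintype I] [Fintype J] [Fintype U]
    (pts1 : I → U → ℝ) (pts2 : J → U → ℝ) (γ : I → J → ℝ) : ℝ :=
  ∑ i, ∑ j, γ i j * ∑ u, |pts1 i u - pts2 j u|

/-- The conditional distance `d_C` between two finitely supported distributions over
distributions on `U`: the optimal transportation cost with ground cost `L1`. -/
noncomputable def dC {I J U : Type*} [Fintype I] [Fintype J] [Fintype U]
    (w1 : I → ℝ) (pts1 : I → U → ℝ) (w2 : J → ℝ) (pts2 : J → U → ℝ) : ℝ :=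
  sInf { c | ∃ γ, IsCoupling w1 w2 γ ∧ c = tcost pts1 pts2 γ }

/-- Conditional entropy `H(X|W) = E_{w~W}[H(X | W = w)]` of a conditional
distribution represented by weights `w` on conditional laws `pts`. -/
noncomputable def condEntRep {I U : Type*} [Fintype I] [Fintype U]
    (w : I → ℝ) (pts : I → U → ℝ) : ℝ :=
  ∑ i, w i * ∑ u, Real.negMulLog (pts i u)

/-! Coordinatewise, `|negMulLog a - negMulLog b|` is bounded by the tangent line of `negMulLog`
at any `m ≤ exp (-1)`, evaluated at `|a - b|`: `m - (1 + log m) |a - b|`. Summing over `U` and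
averaging over a coupling bounds the entropy gap by `m |U| - (1 + log m) · tcost`; the slope
`-(1 + log m)` is nonnegative, so the cost may be replaced by `d_C ≤ ε`, and `m = ε / |U|` gives
`ε log (|U| / ε)`. -/

open Real Finset

namespace Real

/-- The right-hand side is the tangent line of `negMulLog` at `m`. -/
lemma negMulLog_le_sub_one_add_log_mul {r m : ℝ} (hr : 0 ≤ r) (hm : 0 < m) :
    negMulLog r ≤ m - (1 + log m) * r := by
  rcases hr.eq_or_lt with rfl | hr
  · simpa using hm.le
  have h := mul_le_mul_of_nonneg_left (log_le_sub_one_of_pos (div_pos hm hr)) hr.le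
  rw [log_div hm.ne' hr.ne', mul_sub_one, mul_div_cancel₀ _ hr.ne'] at h
  rw [negMulLog]
  linarith

lemma one_add_log_nonpos {m : ℝ} (hm : 0 < m) (hm1 : m ≤ exp (-1)) : 1 + log m ≤ 0 := by
  linarith [(log_le_iff_le_exp hm).2 hm1]

lemma negMulLog_le_exp_neg_one {x : ℝ} (hx : 0 ≤ x) : negMulLog x ≤ exp (-1) := by
  simpa using negMulLog_le_sub_one_add_log_mul hx (exp_pos (-1))

lemma self_le_negMulLog {x : ℝ} (hx : 0 ≤ x) (hx1 : x ≤ exp (-1)) : x ≤ negMulLog x := by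
  rcases hx.eq_or_lt with rfl | hx
  · simp
  have : log x ≤ -1 := (log_le_iff_le_exp hx).2 hx1
  rw [negMulLog]
  nlinarith

lemma negMulLog_add_le {x y : ℝ} (hx : 0 ≤ x) (hy : 0 ≤ y) :
    negMulLog (x + y) ≤ negMulLog x + negMulLog y := by
  have key : ∀ {a b : ℝ}, 0 ≤ a → 0 ≤ b → a * log a ≤ a * log (a + b) := fun {a b} ha hb => by
    rcases ha.eq_or_lt with rfl | ha
    · simp
    exact mul_le_mul_of_nonneg_left (log_le_log ha (by linarith)) ha.le
  simp only [negMulLog, neg_mul]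
  linarith [key hx hy, add_comm x y ▸ key hy hx]

lemma negMulLog_sub_negMulLog_le {a b : ℝ} (ha : 0 ≤ a) (hab : a ≤ b) (hb : b ≤ 1) :
    negMulLog a - negMulLog b ≤ b - a := by
  rcases (ha.trans hab).eq_or_lt with hb0 | hb0
  · obtain rfl : a = 0 := le_antisymm (hb0 ▸ hab) ha
    simp [← hb0]
  have h := negMulLog_le_sub_one_add_log_mul ha hb0
  have : log b ≤ 0 := log_nonpos hb0.le hb
  simp only [negMulLog] at h ⊢
  nlinarith

lemma abs_negMulLog_sub_negMulLog_le_negMulLog {a b : ℝ} (ha : 0 ≤ a) (hab : a ≤ b) (hb : b ≤ 1)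
    (hba : b - a ≤ exp (-1)) : |negMulLog a - negMulLog b| ≤ negMulLog (b - a) := by
  have hup : negMulLog b - negMulLog a ≤ negMulLog (b - a) := by
    have := negMulLog_add_le ha (sub_nonneg.2 hab)
    rw [add_sub_cancel] at this
    linarith
  have hdown : negMulLog a - negMulLog b ≤ negMulLog (b - a) :=
    (negMulLog_sub_negMulLog_le ha hab hb).trans (self_le_negMulLog (sub_nonneg.2 hab) hba)
  exact abs_sub_le_iff.2 ⟨hdown, hup⟩

lemma abs_negMulLog_sub_negMulLog_le {a b m : ℝ} (ha : 0 ≤ a) (ha1 : a ≤ 1) (hb : 0 ≤ b)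
    (hb1 : b ≤ 1) (hm : 0 < m) (hm1 : m ≤ exp (-1)) :
    |negMulLog a - negMulLog b| ≤ m - (1 + log m) * |a - b| := by
  wlog hab : a ≤ b generalizing a b
  · rw [abs_sub_comm, abs_sub_comm a]
    exact this hb hb1 ha ha1 (le_of_not_ge hab)
  rw [abs_sub_comm a, abs_of_nonneg (sub_nonneg.2 hab)]
  rcases le_or_gt (b - a) (exp (-1)) with hba | hba
  · exact (abs_negMulLog_sub_negMulLog_le_negMulLog ha hab hb1 hba).trans
      (negMulLog_le_sub_one_add_log_mul (sub_nonneg.2 hab) hm)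
  calc |negMulLog a - negMulLog b| ≤ exp (-1) :=
        abs_sub_le_of_nonneg_of_le (negMulLog_nonneg ha ha1) (negMulLog_le_exp_neg_one ha)
          (negMulLog_nonneg hb hb1) (negMulLog_le_exp_neg_one hb)
    _ = negMulLog (exp (-1)) := by simp [negMulLog]
    _ ≤ m - (1 + log m) * exp (-1) := negMulLog_le_sub_one_add_log_mul (exp_pos _).le hm
    _ ≤ m - (1 + log m) * (b - a) := by nlinarith [one_add_log_nonpos hm hm1]

end Real

lemma abs_sum_negMulLog_sub_sum_negMulLog_le {U : Type*} [Fintype U] {p q : U → ℝ}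
    (hp : ∀ u, p u ∈ Set.Icc 0 1) (hq : ∀ u, q u ∈ Set.Icc 0 1) {m : ℝ} (hm : 0 < m)
    (hm1 : m ≤ exp (-1)) :
    |∑ u, negMulLog (p u) - ∑ u, negMulLog (q u)| ≤
      m * Fintype.card U - (1 + log m) * ∑ u, |p u - q u| := by
  calc |∑ u, negMulLog (p u) - ∑ u, negMulLog (q u)|
      ≤ ∑ u, |negMulLog (p u) - negMulLog (q u)| := by
        rw [← sum_sub_distrib]; exact abs_sum_le_sum_abs _ _
    _ ≤ ∑ u, (m - (1 + log m) * |p u - q u|) := sum_le_sum fun u _ =>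
        abs_negMulLog_sub_negMulLog_le (hp u).1 (hp u).2 (hq u).1 (hq u).2 hm hm1
    _ = m * Fintype.card U - (1 + log m) * ∑ u, |p u - q u| := by
        rw [sum_sub_distrib, ← mul_sum, sum_const, card_univ, nsmul_eq_mul, mul_comm]

lemma mem_Icc_of_sum_eq_one {U : Type*} [Fintype U] {p : U → ℝ} (hp0 : ∀ u, 0 ≤ p u)
    (hp1 : ∑ u, p u = 1) (u : U) : p u ∈ Set.Icc 0 1 :=
  ⟨hp0 u, hp1 ▸ single_le_sum (fun v _ => hp0 v) (mem_univ u)⟩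

section Coupling

variable {I J U : Type*} [Fintype I] [Fintype J] [Fintype U]

lemma isCoupling_mul {w1 : I → ℝ} {w2 : J → ℝ} (hw10 : ∀ i, 0 ≤ w1 i) (hw11 : ∑ i, w1 i = 1)
    (hw20 : ∀ j, 0 ≤ w2 j) (hw21 : ∑ j, w2 j = 1) :
    IsCoupling w1 w2 fun i j => w1 i * w2 j :=
  ⟨fun i j => mul_nonneg (hw10 i) (hw20 j), fun i => by rw [← mul_sum, hw21, mul_one],
    fun j => by rw [← sum_mul, hw11, one_mul]⟩

lemma IsCoupling.sum_mul_sub_sum_mul {w1 : I → ℝ} {w2 : J → ℝ} {γ : I → J → ℝ}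
    (hγ : IsCoupling w1 w2 γ) (f : I → ℝ) (g : J → ℝ) :
    ∑ i, w1 i * f i - ∑ j, w2 j * g j = ∑ i, ∑ j, γ i j * (f i - g j) := by
  simp only [← hγ.2.1, ← hγ.2.2, sum_mul, mul_sub, sum_sub_distrib]
  rw [sum_comm (f := fun j i => γ i j * g j)]

lemma IsCoupling.sum_sum_eq_one {w1 : I → ℝ} {w2 : J → ℝ} {γ : I → J → ℝ}
    (hγ : IsCoupling w1 w2 γ) (hw11 : ∑ i, w1 i = 1) : ∑ i, ∑ j, γ i j = 1 := by
  simp only [hγ.2.1, hw11]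

lemma tcost_nonneg {pts1 : I → U → ℝ} {pts2 : J → U → ℝ} {γ : I → J → ℝ}
    (hγ : ∀ i j, 0 ≤ γ i j) : 0 ≤ tcost pts1 pts2 γ :=
  sum_nonneg fun i _ => sum_nonneg fun j _ =>
    mul_nonneg (hγ i j) (sum_nonneg fun _ _ => abs_nonneg _)

lemma dC_nonneg (w1 : I → ℝ) (pts1 : I → U → ℝ) (w2 : J → ℝ) (pts2 : J → U → ℝ) :
    0 ≤ dC w1 pts1 w2 pts2 :=
  Real.sInf_nonneg <| by rintro _ ⟨γ, hγ, rfl⟩; exact tcost_nonneg hγ.1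

lemma le_mul_dC {w1 : I → ℝ} {pts1 : I → U → ℝ} {w2 : J → ℝ} {pts2 : J → U → ℝ}
    (hne : ∃ γ, IsCoupling w1 w2 γ) {x c : ℝ} (hc : 0 ≤ c)
    (h : ∀ γ, IsCoupling w1 w2 γ → x ≤ c * tcost pts1 pts2 γ) :
    x ≤ c * dC w1 pts1 w2 pts2 := by
  obtain ⟨γ₀, hγ₀⟩ := hne
  rw [dC, ← smul_eq_mul, ← Real.sInf_smul_of_nonneg hc]
  refine le_csInf ⟨_, Set.smul_mem_smul_set ⟨γ₀, hγ₀, rfl⟩⟩ ?_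
  rintro _ ⟨_, ⟨γ, hγ, rfl⟩, rfl⟩
  exact h γ hγ

end Coupling

section CondEnt

variable {I J U : Type*} [Fintype I] [Fintype J] [Fintype U]
  {w1 : I → ℝ} {w2 : J → ℝ} {pts1 : I → U → ℝ} {pts2 : J → U → ℝ}

lemma abs_condEntRep_sub_le_tcost {γ : I → J → ℝ} (hγ : IsCoupling w1 w2 γ)
    (hw11 : ∑ i, w1 i = 1)
    (hp10 : ∀ i u, 0 ≤ pts1 i u) (hp11 : ∀ i, ∑ u, pts1 i u = 1)
    (hp20 : ∀ j u, 0 ≤ pts2 j u) (hp21 : ∀ j, ∑ u, pts2 j u = 1)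
    {m : ℝ} (hm : 0 < m) (hm1 : m ≤ exp (-1)) :
    |condEntRep w1 pts1 - condEntRep w2 pts2| ≤
      m * Fintype.card U - (1 + log m) * tcost pts1 pts2 γ := by
  calc |condEntRep w1 pts1 - condEntRep w2 pts2|
      = |∑ i, ∑ j, γ i j * (∑ u, negMulLog (pts1 i u) - ∑ u, negMulLog (pts2 j u))| := by
        rw [condEntRep, condEntRep, hγ.sum_mul_sub_sum_mul]
    _ ≤ ∑ i, ∑ j, γ i j * (m * Fintype.card U - (1 + log m) * ∑ u, |pts1 i u - pts2 j u|) := by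
        refine (abs_sum_le_sum_abs _ _).trans (sum_le_sum fun i _ => ?_)
        refine (abs_sum_le_sum_abs _ _).trans (sum_le_sum fun j _ => ?_)
        rw [abs_mul, abs_of_nonneg (hγ.1 i j)]
        exact mul_le_mul_of_nonneg_left (abs_sum_negMulLog_sub_sum_negMulLog_le
          (mem_Icc_of_sum_eq_one (hp10 i) (hp11 i))
          (mem_Icc_of_sum_eq_one (hp20 j) (hp21 j)) hm hm1) (hγ.1 i j)
    _ = m * Fintype.card U - (1 + log m) * tcost pts1 pts2 γ := by
        simp only [tcost, mul_sub, sum_sub_distrib, mul_left_comm _ (1 + log m), ← mul_sum,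
          ← sum_mul, hγ.sum_sum_eq_one hw11, one_mul]

lemma abs_condEntRep_sub_le_of_dC_le (hw10 : ∀ i, 0 ≤ w1 i) (hw11 : ∑ i, w1 i = 1)
    (hw20 : ∀ j, 0 ≤ w2 j) (hw21 : ∑ j, w2 j = 1)
    (hp10 : ∀ i u, 0 ≤ pts1 i u) (hp11 : ∀ i, ∑ u, pts1 i u = 1)
    (hp20 : ∀ j u, 0 ≤ pts2 j u) (hp21 : ∀ j, ∑ u, pts2 j u = 1)
    {ε : ℝ} (hd : dC w1 pts1 w2 pts2 ≤ ε) {m : ℝ} (hm : 0 < m) (hm1 : m ≤ exp (-1)) :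
    |condEntRep w1 pts1 - condEntRep w2 pts2| ≤ m * Fintype.card U - (1 + log m) * ε := by
  have hslope : 0 ≤ -(1 + log m) := neg_nonneg.2 (one_add_log_nonpos hm hm1)
  have hdC := le_mul_dC (pts1 := pts1) (pts2 := pts2)
    (x := |condEntRep w1 pts1 - condEntRep w2 pts2| - m * Fintype.card U)
    ⟨_, isCoupling_mul hw10 hw11 hw20 hw21⟩ hslope fun γ hγ => by
      linarith [abs_condEntRep_sub_le_tcost hγ hw11 hp10 hp11 hp20 hp21 hm hm1]
  nlinarith

lemma condEntRep_eq_zero_of_subsingleton [Subsingleton U] (w : I → ℝ)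
    {pts : I → U → ℝ} (hp1 : ∀ i, ∑ u, pts i u = 1) : condEntRep w pts = 0 := by
  refine sum_eq_zero fun i _ => ?_
  rw [sum_eq_zero fun u _ => ?_, mul_zero]
  rw [← Fintype.sum_subsingleton (pts i) u, hp1 i, negMulLog_one]

end CondEnt

/-- If two conditional distributions are within `ε ≤ 1/2` in the transportation
metric `d_C`, then the conditional entropies of the associated random variables
differ by at most `ε · log(|U|/ε)`. -/
theorem condEnt_close_of_dC_close {I J U : Type*} [Fintype I] [Fintype J] [Fintype U]
    (w1 : I → ℝ) (hw10 : ∀ i, 0 ≤ w1 i) (hw11 : ∑ i, w1 i = 1)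
    (w2 : J → ℝ) (hw20 : ∀ j, 0 ≤ w2 j) (hw21 : ∑ j, w2 j = 1)
    (pts1 : I → U → ℝ) (hp10 : ∀ i u, 0 ≤ pts1 i u) (hp11 : ∀ i, ∑ u, pts1 i u = 1)
    (pts2 : J → U → ℝ) (hp20 : ∀ j u, 0 ≤ pts2 j u) (hp21 : ∀ j, ∑ u, pts2 j u = 1)
    (ε : ℝ) (hd : dC w1 pts1 w2 pts2 ≤ ε) (hε : ε ≤ 1 / 2) :
    |condEntRep w1 pts1 - condEntRep w2 pts2| ≤ ε * Real.log (Fintype.card U / ε) := by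
  have hbound {m : ℝ} (hm : 0 < m) (hm1 : m ≤ exp (-1)) :=
    abs_condEntRep_sub_le_of_dC_le hw10 hw11 hw20 hw21 hp10 hp11 hp20 hp21 hd hm hm1
  rcases (dC_nonneg w1 pts1 w2 pts2 |>.trans hd).eq_or_lt with rfl | hε0
  · rw [zero_mul]
    refine ge_of_tendsto (tendsto_nhdsWithin_of_tendsto_nhds (s := Set.Ioi 0)
      ((continuous_mul_const (Fintype.card U : ℝ)).tendsto' 0 0 (zero_mul _))) ?_
    filter_upwards [Ioc_mem_nhdsGT (exp_pos (-1))] with m hm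
    simpa using hbound hm.1 hm.2
  rcases le_or_gt (Fintype.card U) 1 with hU | hU
  · -- here `ε / |U|` may exceed `exp (-1)`, but both entropies vanish
    have := Fintype.card_le_one_iff_subsingleton.1 hU
    rw [condEntRep_eq_zero_of_subsingleton w1 hp11, condEntRep_eq_zero_of_subsingleton w2 hp21,
      sub_zero, abs_zero]
    interval_cases Fintype.card U
    · simp
    · exact mul_nonneg hε0.le (log_nonneg (by rw [le_div_iff₀ hε0]; push_cast; linarith))
  · have hn : (2 : ℝ) ≤ Fintype.card U := by exact_mod_cast hU
    have hm1 : ε / Fintype.card U ≤ exp (-1) := by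
      rw [div_le_iff₀ (by linarith)]
      nlinarith [exp_neg_one_gt_d9]
    have h := hbound (by positivity) hm1
    rw [log_div hε0.ne' (by linarith)] at h
    rw [log_div (by linarith) hε0.ne']
    field_simp at h
    linarith
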